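/- Let γ, t*, M > 0 and let η > max{γ/M, t*/M, 1/t* + 1/γ}. Set c = η²γ − (γ/t* + 1)η and f(t) = γ t (1 − t/t*)/(1 + c t). Then f(t) < M for all t ∈ [0, t*]. (Proof idea: for t ∈ [0, 1/η], f(t) ≤ γ t ≤ γ/η < M; for t ∈ [1/η, t*], since f(t)/t is decreasing and f(1/η)/(1/η) = 1/η, f(t) ≤ t·(1/η) ≤ t*/η < M.) -/
import Mathlib


open Set

theorem stmt_6 (γ tstar M η c : ℝ) (f : ℝ → ℝ)
    (hγ : 0 < γ) (htstar : 0 < tstar) (hM : 0 < M)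
    (hη1 : γ / M < η) (hη2 : tstar / M < η) (hη3 : 1 / tstar + 1 / γ < η)
    (hc : c = η ^ 2 * γ - (γ / tstar + 1) * η)
    (hf : ∀ t, f t = γ * t * (1 - t / tstar) / (1 + c * t)) :
    ∀ t ∈ Icc (0:ℝ) tstar, f t < M := by
  intro t ht
  obtain ⟨ht0, ht1⟩ := ht
  have hη0 : 0 < η := lt_trans (by positivity) hη3
  have h1 : γ < M * η := by
    rw [div_lt_iff₀ hM] at hη1; linarith [hη1]
  have h2 : tstar < M * η := by
    rw [div_lt_iff₀ hM] at hη2; linarith [hη2]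
  have h3 : γ + tstar < η * γ * tstar := by
    have e1 : (1 / tstar) * (γ * tstar) = γ := by field_simp
    have e2 : (1 / γ) * (γ * tstar) = tstar := by field_simp
    have := mul_lt_mul_of_pos_right hη3 (mul_pos hγ htstar)
    nlinarith [this, e1, e2]
  have hγη : 1 < η * γ := by nlinarith
  have hc0 : 0 < c := by
    rw [hc]
    have : γ / tstar + 1 < η * γ := by
      rw [div_add' _ _ _ (ne_of_gt htstar), div_lt_iff₀ htstar]
      nlinarith
    nlinarith
  have hden : 0 < 1 + c * t := by nlinarith
  rw [hf, div_lt_iff₀ hden, hc]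
  have htne : tstar ≠ 0 := ne_of_gt htstar
  rcases le_or_gt (η * t) 1 with h | h
  · have h4 : 0 ≤ t / tstar := by positivity
    have key : γ * t * (1 - t / tstar) ≤ γ * t := by
      nlinarith [mul_nonneg (mul_nonneg hγ.le ht0) h4]
    have h5 : γ * t < M := by nlinarith
    have hct : 0 ≤ (η ^ 2 * γ - (γ / tstar + 1) * η) * t := by
      rw [← hc]; positivity
    nlinarith [mul_nonneg hM.le hct]
  · have e1 : 0 ≤ η * t - 1 := by linarith
    have expand : 1 + (η ^ 2 * γ - (γ / tstar + 1) * η) * t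
        - η * γ * (1 - t / tstar) = (η * γ - 1) * (η * t - 1) := by
      field_simp; ring
    have key : η * γ * (1 - t / tstar) ≤ 1 + (η ^ 2 * γ - (γ / tstar + 1) * η) * t := by
      nlinarith [mul_nonneg (by linarith : (0:ℝ) ≤ η * γ - 1) e1]
    have hnn : 0 ≤ γ * (1 - t / tstar) := by
      have : t / tstar ≤ 1 := (div_le_one htstar).mpr ht1
      nlinarith
    have step : γ * t * (1 - t / tstar) ≤ t * (1 + c * t) / η := by
      rw [le_div_iff₀ hη0]
      calc γ * t * (1 - t / tstar) * η = t * (η * γ * (1 - t / tstar)) := by ring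
        _ ≤ t * (1 + c * t) := by
            rw [hc]; exact mul_le_mul_of_nonneg_left key ht0
    have step2 : t * (1 + c * t) / η < M * (1 + c * t) := by
      rw [div_lt_iff₀ hη0]
      calc t * (1 + c * t) ≤ tstar * (1 + c * t) :=
            mul_le_mul_of_nonneg_right ht1 (le_of_lt hden)
        _ < M * η * (1 + c * t) := mul_lt_mul_of_pos_right h2 hden
        _ = M * (1 + c * t) * η := by ring
    calc γ * t * (1 - t / tstar) ≤ t * (1 + c * t) / η := step
      _ < M * (1 + c * t) := step2
      _ = M * (1 + (η ^ 2 * γ - (γ / tstar + 1) * η) * t) := by rw [hc]
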